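/- arXiv:2103.13848 — 7 statements merged into one kernel-verified Lean document; each statement's English description precedes it below -/
import Mathlib

section
/- Any square-like quadrilateral pqrs in ℝⁿ (equal sides, equal diagonals) has the property that the sum of the exterior (turning) angles at q and r along the open polygonal path p→q→r→s is at least π, with equality if and only if pqrs is a planar square (i.e., the diagonal length equals √2 times the side length). -/
/-!
Write `a` for the side and `d` for the common diagonal. Euler's quadrilateral identity gives
`2 d² ≤ 4 a²`, so by the law of cosines the isosceles angles at `q` and `r` are at most right and
each turning angle is at least `π / 2`; both are right exactly when `d² = 2 a²`.
-/

open InnerProductGeometry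
open scoped RealInnerProductSpace

variable {E : Type*} [NormedAddCommGroup E] [InnerProductSpace ℝ E]

/-- Euler's quadrilateral identity; `p - q + (r - s)` is twice the difference of the midpoints
of the diagonals. -/
theorem norm_sub_sq_sides_eq_norm_sub_sq_diagonals_add (p q r s : E) :
    ‖p - q‖ ^ 2 + ‖q - r‖ ^ 2 + ‖r - s‖ ^ 2 + ‖s - p‖ ^ 2 =
      ‖p - r‖ ^ 2 + ‖q - s‖ ^ 2 + ‖p - q + (r - s)‖ ^ 2 := by
  rw [show p - r = p - q + (q - r) by abel, show q - s = q - r + (r - s) by abel,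
    show s - p = -(p - q + (q - r) + (r - s)) by abel, norm_neg]
  generalize p - q = x, q - r = y, r - s = z
  simp only [← real_inner_self_eq_norm_sq, inner_add_left, inner_add_right,
    real_inner_comm x y, real_inner_comm x z, real_inner_comm y z]
  ring

theorem norm_sub_sq_diagonals_le_norm_sub_sq_sides (p q r s : E) :
    ‖p - r‖ ^ 2 + ‖q - s‖ ^ 2 ≤ ‖p - q‖ ^ 2 + ‖q - r‖ ^ 2 + ‖r - s‖ ^ 2 + ‖s - p‖ ^ 2 := by
  rw [norm_sub_sq_sides_eq_norm_sub_sq_diagonals_add]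
  exact le_add_of_nonneg_right (sq_nonneg _)

theorem InnerProductGeometry.angle_le_pi_div_two_iff_inner_nonneg (x y : E) :
    angle x y ≤ Real.pi / 2 ↔ 0 ≤ ⟪x, y⟫ := by
  rw [angle, Real.arccos_le_pi_div_two]
  rcases eq_or_ne x 0 with rfl | hx
  · simp
  rcases eq_or_ne y 0 with rfl | hy
  · simp
  rw [le_div_iff₀ (by positivity), zero_mul]

namespace EuclideanGeometry

theorem angle_le_pi_div_two_iff_norm_sub_sq_le (p q r : E) :
    ∠ p q r ≤ Real.pi / 2 ↔ ‖p - r‖ ^ 2 ≤ ‖p - q‖ ^ 2 + ‖r - q‖ ^ 2 := by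
  rw [angle, vsub_eq_sub, vsub_eq_sub, angle_le_pi_div_two_iff_inner_nonneg,
    show p - r = p - q - (r - q) by abel, norm_sub_sq_real]
  constructor <;> intro h <;> linarith

theorem angle_eq_pi_div_two_iff_norm_sub_eq_sqrt_two_mul {p q r : E} {a : ℝ}
    (hp : ‖p - q‖ = a) (hr : ‖r - q‖ = a) :
    ∠ p q r = Real.pi / 2 ↔ ‖p - r‖ = √2 * a := by
  have ha : 0 ≤ a := hp ▸ norm_nonneg _
  rw [angle, vsub_eq_sub, vsub_eq_sub,
    ← norm_sub_sq_eq_norm_sq_add_norm_sq_iff_angle_eq_pi_div_two,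
    show p - q - (r - q) = p - r by abel, hp, hr, ← Real.sqrt_inj (by positivity) (by positivity),
    Real.sqrt_mul_self (norm_nonneg _), show a * a + a * a = 2 * a ^ 2 by ring,
    Real.sqrt_mul zero_le_two, Real.sqrt_sq ha]

end EuclideanGeometry

open EuclideanGeometry

theorem slq_turning_ge_pi_general {n : ℕ} (p q r s : EuclideanSpace ℝ (Fin n)) (a : ℝ)
    (h1 : ‖p - q‖ = a) (h2 : ‖q - r‖ = a) (h3 : ‖r - s‖ = a) (h4 : ‖s - p‖ = a)
    (h5 : ‖p - r‖ = ‖q - s‖) :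
    Real.pi ≤ (Real.pi - EuclideanGeometry.angle p q r) +
        (Real.pi - EuclideanGeometry.angle q r s) ∧
    ((Real.pi - EuclideanGeometry.angle p q r) +
        (Real.pi - EuclideanGeometry.angle q r s) = Real.pi ↔
      ‖p - r‖ = Real.sqrt 2 * a) := by
  have hd : ‖p - r‖ ^ 2 ≤ a ^ 2 + a ^ 2 := by
    have := norm_sub_sq_diagonals_le_norm_sub_sq_sides p q r s
    rw [h1, h2, h3, h4, ← h5] at this
    linarith
  have hq : ∠ p q r ≤ Real.pi / 2 := (angle_le_pi_div_two_iff_norm_sub_sq_le p q r).2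
    (by rwa [h1, norm_sub_rev r q, h2])
  have hr : ∠ q r s ≤ Real.pi / 2 := (angle_le_pi_div_two_iff_norm_sub_sq_le q r s).2
    (by rwa [h2, norm_sub_rev s r, h3, ← h5])
  have hq_right : ∠ p q r = Real.pi / 2 ↔ ‖p - r‖ = √2 * a :=
    angle_eq_pi_div_two_iff_norm_sub_eq_sqrt_two_mul h1 (by rw [norm_sub_rev, h2])
  have hr_right : ∠ q r s = Real.pi / 2 ↔ ‖p - r‖ = √2 * a := by
    rw [h5]
    exact angle_eq_pi_div_two_iff_norm_sub_eq_sqrt_two_mul h2 (by rw [norm_sub_rev, h3])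
  refine ⟨by linarith, ?_⟩
  rw [← hq_right]
  constructor
  · intro h
    linarith
  · intro h
    linarith [hr_right.2 (hq_right.1 h)]

/-- For a square-like quadrilateral `pqrs` in `ℝⁿ` (equal sides
of positive length `a`, equal diagonals, no three consecutive vertices collinear),
the sum of the exterior turning angles at `q` and `r` along the open path
`p → q → r → s` is at least `π`, with equality if and only if `pqrs` is a planar
square, i.e. the diagonal length equals `√2` times the side length. -/
theorem slq_turning_ge_pi {n : ℕ} (p q r s : EuclideanSpace ℝ (Fin n)) (a : ℝ)
    (ha : 0 < a)
    (h1 : ‖p - q‖ = a) (h2 : ‖q - r‖ = a) (h3 : ‖r - s‖ = a) (h4 : ‖s - p‖ = a)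
    (h5 : ‖p - r‖ = ‖q - s‖)
    (hc1 : ¬ Collinear ℝ ({p, q, r} : Set (EuclideanSpace ℝ (Fin n))))
    (hc2 : ¬ Collinear ℝ ({q, r, s} : Set (EuclideanSpace ℝ (Fin n)))) :
    Real.pi ≤ (Real.pi - EuclideanGeometry.angle p q r) +
        (Real.pi - EuclideanGeometry.angle q r s) ∧
    ((Real.pi - EuclideanGeometry.angle p q r) +
        (Real.pi - EuclideanGeometry.angle q r s) = Real.pi ↔
      ‖p - r‖ = Real.sqrt 2 * a) :=
  slq_turning_ge_pi_general p q r s a h1 h2 h3 h4 h5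
end

section
/- If pqrs is a square-like quadrilateral in ℝ² (equal sides and equal diagonals, with positive side length), then pqrs is a square: the diagonals have length √2 times the side length, and adjacent sides are perpendicular. -/
/-!
In a rhombus `pqrs` each diagonal has its endpoints equidistant from the endpoints of the other,
so the diagonals are perpendicular, and the vector `q + s - (p + r)` joining their midpoints
(doubled) is orthogonal to both. In the plane two perpendicular nonzero vectors span everything,
so the midpoints coincide and the rhombus is a parallelogram: `r - p = u + v` and `q - s = u - v`
for the sides `u = q - p`, `v = s - p`. Equal diagonals `‖u + v‖ = ‖u - v‖` then mean `u ⟂ v`,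
and Pythagoras gives the diagonal `√(a² + a²) = a√2`.
-/

open scoped InnerProductSpace

open Module Submodule InnerProductGeometry

theorem eq_zero_of_inner_eq_zero_of_finrank_eq_two {𝕜 E : Type*} [RCLike 𝕜]
    [NormedAddCommGroup E] [InnerProductSpace 𝕜 E] [Fact (finrank 𝕜 E = 2)] {x y z : E}
    (hy : y ≠ 0) (hz : z ≠ 0) (hyz : ⟪y, z⟫_𝕜 = 0) (hyx : ⟪y, x⟫_𝕜 = 0) (hzx : ⟪z, x⟫_𝕜 = 0) :
    x = 0 := by
  obtain ⟨c, rfl⟩ := mem_span_singleton.1 <|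
    mem_span_singleton_of_inner_eq_zero_of_inner_eq_zero hy hz hyx hyz
  rw [inner_smul_right, mul_eq_zero, inner_self_eq_zero] at hzx
  simp [hzx.resolve_right hz]

section Real

variable {E : Type*} [NormedAddCommGroup E] [InnerProductSpace ℝ E]

theorem inner_add_sub_add_eq_zero_of_norm_sub_eq {p q r s : E} (hq : ‖q - p‖ = ‖q - r‖)
    (hs : ‖s - p‖ = ‖s - r‖) : ⟪r - p, q + s - (p + r)⟫_ℝ = 0 := by
  have hq' : ‖q - p‖ ^ 2 = ‖q - r‖ ^ 2 := by rw [hq]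
  have hs' : ‖s - p‖ ^ 2 = ‖s - r‖ ^ 2 := by rw [hs]
  simp only [norm_sub_sq_real] at hq' hs'
  simp only [inner_sub_left, inner_sub_right, inner_add_right, real_inner_self_eq_norm_sq]
  linarith [real_inner_comm p r, real_inner_comm p q, real_inner_comm p s, real_inner_comm r q,
    real_inner_comm r s]

theorem add_eq_add_of_rhombus [Fact (finrank ℝ E = 2)] {p q r s : E} {a : ℝ}
    (h₁ : ‖p - q‖ = a) (h₂ : ‖q - r‖ = a) (h₃ : ‖r - s‖ = a) (h₄ : ‖s - p‖ = a)
    (hpr : p ≠ r) (hqs : q ≠ s) : q + s = p + r := by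
  have hdiag : ⟪r - p, s - q⟫_ℝ = 0 := by
    rw [real_inner_comm]
    refine EuclideanGeometry.inner_vsub_vsub_of_dist_eq_of_dist_eq (P := E) ?_ ?_ <;>
      simp only [dist_eq_norm]
    · rw [h₁, norm_sub_rev, h₂]
    · rw [norm_sub_rev, h₄, h₃]
  have hpr' : ⟪r - p, q + s - (p + r)⟫_ℝ = 0 :=
    inner_add_sub_add_eq_zero_of_norm_sub_eq (by rw [norm_sub_rev q, h₁, h₂])
      (by rw [h₄, norm_sub_rev, h₃])
  have hqs' : ⟪s - q, q + s - (p + r)⟫_ℝ = 0 := by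
    rw [← neg_sub (p + r), inner_neg_right,
      inner_add_sub_add_eq_zero_of_norm_sub_eq (by rw [h₁, norm_sub_rev, h₄])
        (by rw [norm_sub_rev, h₂, h₃]), neg_zero]
  exact sub_eq_zero.1 <| eq_zero_of_inner_eq_zero_of_finrank_eq_two (sub_ne_zero.2 hpr.symm)
    (sub_ne_zero.2 hqs.symm) hdiag hpr' hqs'

end Real

theorem planar_slq_is_square_general (p q r s : EuclideanSpace ℝ (Fin 2)) (a : ℝ)
    (h1 : ‖p - q‖ = a) (h2 : ‖q - r‖ = a) (h3 : ‖r - s‖ = a) (h4 : ‖s - p‖ = a)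
    (h5 : ‖p - r‖ = ‖q - s‖)
    (hpr : p ≠ r) (hqs : q ≠ s) :
    ‖p - r‖ = a * Real.sqrt 2 ∧ ⟪q - p, s - p⟫_ℝ = 0 := by
  have : Fact (finrank ℝ (EuclideanSpace ℝ (Fin 2)) = 2) := ⟨finrank_euclideanSpace_fin⟩
  have hpar := add_eq_add_of_rhombus h1 h2 h3 h4 hpr hqs
  have hdiag₁ : r - p = (q - p) + (s - p) := by rw [eq_sub_of_add_eq' hpar.symm]; abel
  have hdiag₂ : q - s = (q - p) - (s - p) := by abel
  rw [norm_sub_rev p, hdiag₁, hdiag₂] at h5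
  rw [norm_sub_rev p, hdiag₁]
  have hrect : ⟪q - p, s - p⟫_ℝ = 0 :=
    (inner_eq_zero_iff_angle_eq_pi_div_two _ _).2
      ((norm_add_eq_norm_sub_iff_angle_eq_pi_div_two _ _).1 h5)
  refine ⟨?_, hrect⟩
  have ha : 0 ≤ a := h1 ▸ norm_nonneg _
  rw [norm_add_eq_sqrt_iff_real_inner_eq_zero.2 hrect, norm_sub_rev, h1, h4, ← two_mul,
    Real.sqrt_mul zero_le_two, Real.sqrt_mul_self ha, mul_comm]

/-- A square-like quadrilateral `pqrs` in `ℝ²` (equal sides of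
positive length `a`, equal diagonals, distinct vertices) is a square:
the diagonals have length `√2 · a` and adjacent sides are perpendicular. -/
theorem planar_slq_is_square (p q r s : EuclideanSpace ℝ (Fin 2)) (a : ℝ)
    (ha : 0 < a)
    (h1 : ‖p - q‖ = a) (h2 : ‖q - r‖ = a) (h3 : ‖r - s‖ = a) (h4 : ‖s - p‖ = a)
    (h5 : ‖p - r‖ = ‖q - s‖)
    (hpq : p ≠ q) (hqr : q ≠ r) (hrs : r ≠ s) (hsp : s ≠ p)
    (hpr : p ≠ r) (hqs : q ≠ s) :
    ‖p - r‖ = a * Real.sqrt 2 ∧ ⟪q - p, s - p⟫_ℝ = 0 :=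
  planar_slq_is_square_general p q r s a h1 h2 h3 h4 h5 hpr hqs
end

section
/- For rectifiable curves K and L in ℝⁿ of finite total curvature, |Len(K) − Len(L)| ≤ δ(K,L)·(π·max{TC(K),TC(L)} + 2), where δ(K,L) is the Fréchet distance between K and L, Len denotes arclength, and TC denotes total curvature. -/
noncomputable section

/-- Sum of the exterior turning angles of the polygonal path through the given
list of vertices. -/
def turnSum {n : ℕ} : List (EuclideanSpace ℝ (Fin n)) → ℝ
  | a :: b :: c :: rest =>
      InnerProductGeometry.angle (b - a) (c - b) + turnSum (b :: c :: rest)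
  | _ => 0

/-- The set of turning-angle sums of polygons inscribed in `γ`, with vertex
parameters drawn (in increasing order) from `[0,1]`. -/
def tcSet {n : ℕ} (γ : ℝ → EuclideanSpace ℝ (Fin n)) : Set ℝ :=
  {x | ∃ t : List ℝ, t.Chain' (· < ·) ∧ (∀ u ∈ t, u ∈ Set.Icc (0:ℝ) 1) ∧
    x = turnSum (t.map γ)}

/-- The total curvature of the curve `γ : [0,1] → ℝⁿ`: the supremum of the
turning-angle sums of inscribed polygons. -/
def totCurv {n : ℕ} (γ : ℝ → EuclideanSpace ℝ (Fin n)) : ℝ := sSup (tcSet γ)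

/-- The arclength of the curve `γ : [0,1] → ℝⁿ`. -/
def len {n : ℕ} (γ : ℝ → EuclideanSpace ℝ (Fin n)) : ℝ :=
  (eVariationOn γ (Set.Icc 0 1)).toReal

/-- The Fréchet distance between the curves `K, L : [0,1] → ℝⁿ`: the infimum
over (strictly monotone, continuous, endpoint-preserving) reparametrizations
`σ` of the supremum of `‖K t − L (σ t)‖`. -/
def frechetDist {n : ℕ} (K L : ℝ → EuclideanSpace ℝ (Fin n)) : ℝ :=
  ⨅ σ : {f : ℝ → ℝ // ContinuousOn f (Set.Icc 0 1) ∧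
      StrictMonoOn f (Set.Icc 0 1) ∧ f 0 = 0 ∧ f 1 = 1},
    ⨆ t : Set.Icc (0:ℝ) 1, ‖K t - L (σ.1 t)‖

/-!
Inscribe a polygon `p` in `K` and let `q` be the polygon of `L` at the matched parameters, so
that corresponding vertices are `ε`-close. Writing each edge of `p` as its inner product with its
own unit direction and summing by parts gives `len p ≤ len q + ε · (turning of p + 2)`: each
interior vertex contributes `ε` times the distance between the adjacent unit directions, which is
at most the turning angle there, and each endpoint contributes at most `ε`. Taking suprema gives
`len K ≤ len L + ε · (TC K + 2)`; running the inverse reparametrization gives the reverse bound.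
-/

open Set Real InnerProductGeometry
open scoped RealInnerProductSpace

def polyLen {E : Type*} [SeminormedAddCommGroup E] : List E → ℝ
  | a :: b :: rest => ‖b - a‖ + polyLen (b :: rest)
  | _ => 0

section Variation
variable {α E : Type*} [LinearOrder α] [SeminormedAddCommGroup E]

lemma polyLen_nonneg : ∀ p : List E, 0 ≤ polyLen p
  | _ :: b :: rest => add_nonneg (norm_nonneg _) (polyLen_nonneg (b :: rest))
  | [] | [_] => le_rfl

lemma polyLen_map_range (v : ℕ → E) (m : ℕ) :
    polyLen ((List.range (m + 1)).map v) = ∑ i ∈ Finset.range m, ‖v (i + 1) - v i‖ := by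
  induction m generalizing v with
  | zero => simp [polyLen]
  | succ m ih =>
    have h := ih (fun i => v (i + 1))
    beta_reduce at h
    rw [Finset.sum_range_succ', ← h, List.range_succ_eq_map, List.map_cons, List.map_map,
      List.range_succ_eq_map, add_comm]
    rfl

lemma ofReal_polyLen_map_le_eVariationOn (f : α → E) {s : Set α} :
    ∀ (x : α) (r : List α), (x :: r).IsChain (· ≤ ·) → (∀ u ∈ x :: r, u ∈ s) →
      ENNReal.ofReal (polyLen ((x :: r).map f)) ≤ eVariationOn f (s ∩ Ici x)
  | x, [], _, _ => by simp [polyLen]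
  | x, y :: r, hchain, hs => by
    obtain ⟨hxy, hchain'⟩ := List.isChain_cons_cons.1 hchain
    have hedge : ENNReal.ofReal ‖f y - f x‖ ≤ eVariationOn f {x, y} := by
      rw [ofReal_norm, ← edist_eq_enorm_sub]
      exact eVariationOn.edist_le f (mem_insert_of_mem x rfl) (mem_insert x _)
    have hunion := eVariationOn.add_le_union f (s := {x, y}) (t := s ∩ Ici y) (by
      rintro a (rfl | rfl) b ⟨-, hb⟩ <;> [exact hxy.trans hb; exact hb])
    have hsub : {x, y} ∪ s ∩ Ici y ⊆ s ∩ Ici x := by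
      rintro a ((rfl | rfl) | ⟨ha, hya⟩)
      · exact ⟨hs a List.mem_cons_self, le_rfl⟩
      · exact ⟨hs a (List.mem_cons_of_mem x List.mem_cons_self), hxy⟩
      · exact ⟨ha, hxy.trans hya⟩
    calc ENNReal.ofReal (polyLen ((x :: y :: r).map f))
        = ENNReal.ofReal ‖f y - f x‖ + ENNReal.ofReal (polyLen ((y :: r).map f)) :=
          ENNReal.ofReal_add (norm_nonneg _) (polyLen_nonneg _)
      _ ≤ eVariationOn f {x, y} + eVariationOn f (s ∩ Ici y) :=
          add_le_add hedge (ofReal_polyLen_map_le_eVariationOn f y r hchain'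
            fun u hu => hs u (List.mem_cons_of_mem x hu))
      _ ≤ eVariationOn f (s ∩ Ici x) := hunion.trans (eVariationOn.mono f hsub)

lemma BoundedVariationOn.norm_sub_le {f : α → E} {s : Set α} (hf : BoundedVariationOn f s)
    {x y : α} (hx : x ∈ s) (hy : y ∈ s) : ‖f x - f y‖ ≤ (eVariationOn f s).toReal := by
  rw [← ENNReal.ofReal_le_iff_le_toReal hf, ofReal_norm, ← edist_eq_enorm_sub]
  exact eVariationOn.edist_le f hx hy

lemma polyLen_map_le_toReal_eVariationOn {f : α → E} {s : Set α} (hf : BoundedVariationOn f s)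
    {l : List α} (hl : l.IsChain (· ≤ ·)) (hls : ∀ u ∈ l, u ∈ s) :
    polyLen (l.map f) ≤ (eVariationOn f s).toReal := by
  cases l with
  | nil => simp [polyLen]
  | cons x r =>
    rw [← ENNReal.ofReal_le_iff_le_toReal hf]
    exact (ofReal_polyLen_map_le_eVariationOn f x r hl hls).trans
      (eVariationOn.mono f inter_subset_left)

lemma exists_polyLen_map_gt_of_lt_toReal_eVariationOn (f : α → E) {s : Set α} {c : ℝ}
    (hc : c < (eVariationOn f s).toReal) :
    ∃ l : List α, l.IsChain (· < ·) ∧ (∀ u ∈ l, u ∈ s) ∧ c < polyLen (l.map f) := by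
  rcases lt_or_ge c 0 with hc0 | hc0
  · exact ⟨[], List.isChain_nil, by simp, by simpa [polyLen] using hc0⟩
  have hlt : ENNReal.ofReal c < eVariationOn f s :=
    (ENNReal.ofReal_lt_ofReal_iff'.2 ⟨hc, hc0.trans_lt hc⟩).trans_le ENNReal.ofReal_toReal_le
  rw [eVariationOn.eVariationOn_eq_strictMonoOn, lt_iSup_iff] at hlt
  obtain ⟨⟨m, u, hu, hus⟩, hlt⟩ := hlt
  refine ⟨(List.range (m + 1)).map u, ?_, ?_, ?_⟩
  · rw [List.isChain_map, List.isChain_range_succ]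
    exact fun i hi => hu (mem_Iic.2 hi.le) (mem_Iic.2 hi) (Nat.lt_succ_self i)
  · simpa using fun i hi => hus i (mem_Iic.2 (Nat.lt_succ_iff.1 hi))
  · rw [List.map_map, polyLen_map_range, ← ENNReal.ofReal_lt_ofReal_iff_of_nonneg hc0,
      ENNReal.ofReal_sum_of_nonneg fun i _ => norm_nonneg _]
    simpa [ofReal_norm, edist_eq_enorm_sub] using hlt

end Variation

section Angle
variable {V : Type*} [NormedAddCommGroup V] [InnerProductSpace ℝ V]

lemma norm_normalize_le_one (x : V) : ‖NormedSpace.normalize x‖ ≤ 1 := by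
  rcases eq_or_ne x 0 with rfl | hx
  · simp
  · exact (NormedSpace.norm_normalize hx).le

lemma real_inner_normalize_self (x : V) : ⟪x, NormedSpace.normalize x⟫ = ‖x‖ := by
  rw [NormedSpace.normalize, real_inner_smul_right, real_inner_self_eq_norm_sq]
  rcases eq_or_ne x 0 with rfl | hx
  · simp
  · field_simp [norm_ne_zero_iff.mpr hx]

/-- Chord length is at most arc length; the degenerate cases hold because
`angle x 0 = π / 2 ≥ 1`. -/
lemma norm_normalize_sub_normalize_le_angle (x y : V) :
    ‖NormedSpace.normalize x - NormedSpace.normalize y‖ ≤ angle x y := by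
  have hπ : 1 ≤ π / 2 := by linarith [pi_gt_three]
  rcases eq_or_ne x 0 with rfl | hx
  · simpa using (norm_normalize_le_one y).trans hπ
  rcases eq_or_ne y 0 with rfl | hy
  · simpa using (norm_normalize_le_one x).trans hπ
  have hcos : ⟪NormedSpace.normalize x, NormedSpace.normalize y⟫ = cos (angle x y) := by
    rw [cos_angle, NormedSpace.normalize, NormedSpace.normalize, real_inner_smul_left,
      real_inner_smul_right]
    field_simp
  have hsq : ‖NormedSpace.normalize x - NormedSpace.normalize y‖ ^ 2 ≤ angle x y ^ 2 := by
    rw [norm_sub_sq_real, NormedSpace.norm_normalize hx, NormedSpace.norm_normalize hy, hcos]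
    linarith [one_sub_sq_div_two_le_cos (x := angle x y)]
  exact (pow_le_pow_iff_left₀ (norm_nonneg _) (angle_nonneg x y) two_ne_zero).mp hsq

lemma real_inner_normalize_le (x y : V) : ⟪x, NormedSpace.normalize y⟫ ≤ ‖x‖ :=
  (real_inner_le_norm _ _).trans (mul_le_of_le_one_right (norm_nonneg x) (norm_normalize_le_one y))

lemma norm_sub_add_inner_le (a b a' b' : V) :
    ‖b - a‖ + ⟪a - a', NormedSpace.normalize (b - a)⟫ ≤
      ‖b' - a'‖ + ⟪b - b', NormedSpace.normalize (b - a)⟫ := by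
  have hself := real_inner_normalize_self (b - a)
  have hsplit : b - a = (b' - a') + (b - b') - (a - a') := by abel
  rw [hsplit, inner_sub_left, inner_add_left, ← hsplit] at hself
  linarith [real_inner_normalize_le (b' - a') (b - a)]

end Angle

section Perturbation
variable {n : ℕ} {ε : ℝ}

/-- Summation by parts of `norm_sub_add_inner_le` along the polygon `p`. The inner product on the
left is the boundary term at the first vertex, carried along so that the induction closes; each
interior vertex `p_i` contributes `⟪p_i - q_i, u_{i-1} - u_i⟫ ≤ ε · (turning angle at p_i)`, where
`u_i` is the unit direction of the `i`-th edge of `p`. -/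
lemma polyLen_add_inner_le :
    ∀ {a b a' b' : EuclideanSpace ℝ (Fin n)} {r r' : List (EuclideanSpace ℝ (Fin n))},
      List.Forall₂ (fun x y => ‖x - y‖ ≤ ε) (a :: b :: r) (a' :: b' :: r') →
      polyLen (a :: b :: r) + ⟪a - a', NormedSpace.normalize (b - a)⟫ ≤
        polyLen (a' :: b' :: r') + ε * turnSum (a :: b :: r) + ε
  | a, b, a', b', [], [], h => by
    obtain ⟨hb, -⟩ := List.forall₂_cons.1 (List.forall₂_cons.1 h).2
    simp only [polyLen, turnSum]
    linarith [norm_sub_add_inner_le a b a' b', (real_inner_normalize_le (b - b') (b - a)).trans hb]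
  | a, b, a', b', c :: r, c' :: r', h => by
    have htail := (List.forall₂_cons.1 h).2
    have hb : ‖b - b'‖ ≤ ε := (List.forall₂_cons.1 htail).1
    have hedge := norm_sub_add_inner_le a b a' b'
    have hrest := polyLen_add_inner_le htail
    have hturn : ⟪b - b', NormedSpace.normalize (b - a)⟫ - ⟪b - b', NormedSpace.normalize (c - b)⟫
        ≤ ε * angle (b - a) (c - b) := by
      rw [← inner_sub_right]
      calc _ ≤ ‖b - b'‖ * ‖NormedSpace.normalize (b - a) - NormedSpace.normalize (c - b)‖ :=
            real_inner_le_norm _ _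
        _ ≤ ε * angle (b - a) (c - b) :=
            mul_le_mul hb (norm_normalize_sub_normalize_le_angle _ _) (norm_nonneg _)
              ((norm_nonneg _).trans hb)
    simp only [polyLen, turnSum] at hrest ⊢
    linarith
  | _, _, _, _, [], _ :: _, h | _, _, _, _, _ :: _, [], h => by
    simpa using h.length_eq

lemma polyLen_le_polyLen_add_mul_turnSum (hε : 0 ≤ ε) {p q : List (EuclideanSpace ℝ (Fin n))}
    (h : List.Forall₂ (fun x y => ‖x - y‖ ≤ ε) p q) :
    polyLen p ≤ polyLen q + ε * (turnSum p + 2) := by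
  rcases h with _ | @⟨a, a', _, _, ha, _ | @⟨b, b', r, r', hb, hr⟩⟩
  · simp only [polyLen, turnSum]; linarith
  · simp only [polyLen, turnSum]; linarith
  · have hmain := polyLen_add_inner_le (List.Forall₂.cons ha (List.Forall₂.cons hb hr))
    have hstart := real_inner_normalize_le (a' - a) (b - a)
    rw [← neg_sub, inner_neg_left, norm_neg] at hstart
    linarith

end Perturbation

lemma StrictMonoOn.monotoneOn_invFunOn {α β : Type*} [LinearOrder α] [Preorder β] [Nonempty α]
    {f : α → β} {s : Set α} {t : Set β} (hf : StrictMonoOn f s) (hst : SurjOn f s t) :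
    MonotoneOn (Function.invFunOn f s) t := by
  intro x hx y hy hxy
  rwa [← hf.le_iff_le (hst.mapsTo_invFunOn hx) (hst.mapsTo_invFunOn hy),
    hst.rightInvOn_invFunOn hx, hst.rightInvOn_invFunOn hy]

lemma MonotoneOn.mapsTo_Icc_of_map_eq {α : Type*} [Preorder α] {f : α → α} {a b : α}
    (hf : MonotoneOn f (Icc a b)) (ha : f a = a) (hb : f b = b) :
    MapsTo f (Icc a b) (Icc a b) := by
  simpa only [ha, hb] using hf.mapsTo_Icc

section Curves
variable {n : ℕ} {K L : ℝ → EuclideanSpace ℝ (Fin n)}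

lemma totCurv_nonneg (hK : BddAbove (tcSet K)) : 0 ≤ totCurv K :=
  le_csSup hK ⟨[], List.isChain_nil, by simp, rfl⟩

lemma len_le_len_add_mul_totCurv {φ : ℝ → ℝ} {ε : ℝ} (hLr : BoundedVariationOn L (Icc 0 1))
    (hKtc : BddAbove (tcSet K)) (hφ : MonotoneOn φ (Icc 0 1)) (hφI : MapsTo φ (Icc 0 1) (Icc 0 1))
    (hε : ∀ t ∈ Icc (0 : ℝ) 1, ‖K t - L (φ t)‖ ≤ ε) :
    len K ≤ len L + ε * (totCurv K + 2) := by
  have hε0 : 0 ≤ ε := (norm_nonneg _).trans (hε 0 (left_mem_Icc.2 zero_le_one))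
  refine le_of_forall_lt fun c hc => ?_
  obtain ⟨t, ht, htI, hct⟩ := exists_polyLen_map_gt_of_lt_toReal_eVariationOn K hc
  have hclose : List.Forall₂ (fun x y => ‖x - y‖ ≤ ε) (t.map K) ((t.map φ).map L) := by
    rw [List.map_map, List.forall₂_map_left_iff, List.forall₂_map_right_iff, List.forall₂_same]
    exact fun x hx => hε x (htI x hx)
  have hφt : (t.map φ).IsChain (· ≤ ·) := (List.isChain_map φ).2
    (ht.imp_of_mem_imp fun a b ha hb hab => hφ (htI a ha) (htI b hb) hab.le)
  have hlenL : polyLen ((t.map φ).map L) ≤ len L :=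
    polyLen_map_le_toReal_eVariationOn hLr hφt (by simpa using fun x hx => hφI (htI x hx))
  have hturn : turnSum (t.map K) ≤ totCurv K := le_csSup hKtc ⟨t, ht, htI, rfl⟩
  calc c < polyLen (t.map K) := hct
    _ ≤ polyLen ((t.map φ).map L) + ε * (turnSum (t.map K) + 2) :=
        polyLen_le_polyLen_add_mul_turnSum hε0 hclose
    _ ≤ len L + ε * (totCurv K + 2) := by gcongr

lemma abs_len_sub_len_le_mul {σ : ℝ → ℝ} {ε : ℝ}
    (hKr : BoundedVariationOn K (Icc 0 1)) (hLr : BoundedVariationOn L (Icc 0 1))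
    (hKtc : BddAbove (tcSet K)) (hLtc : BddAbove (tcSet L))
    (hσc : ContinuousOn σ (Icc 0 1)) (hσm : StrictMonoOn σ (Icc 0 1)) (hσ0 : σ 0 = 0)
    (hσ1 : σ 1 = 1) (hε : ∀ t ∈ Icc (0 : ℝ) 1, ‖K t - L (σ t)‖ ≤ ε) :
    |len K - len L| ≤ ε * (max (totCurv K) (totCurv L) + 2) := by
  have hσI : MapsTo σ (Icc 0 1) (Icc 0 1) := hσm.monotoneOn.mapsTo_Icc_of_map_eq hσ0 hσ1
  have hσS : SurjOn σ (Icc 0 1) (Icc 0 1) := by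
    have h := intermediate_value_Icc (zero_le_one' ℝ) hσc
    rwa [hσ0, hσ1] at h
  have hKL := len_le_len_add_mul_totCurv hLr hKtc hσm.monotoneOn hσI hε
  have hLK : len L ≤ len K + ε * (totCurv L + 2) :=
    len_le_len_add_mul_totCurv hKr hLtc (hσm.monotoneOn_invFunOn hσS) hσS.mapsTo_invFunOn
      fun s hs => by
        have hs' : σ (Function.invFunOn σ (Icc 0 1) s) = s := hσS.rightInvOn_invFunOn hs
        simpa only [hs', norm_sub_rev] using hε _ (hσS.mapsTo_invFunOn hs)
  have hε0 : 0 ≤ ε := (norm_nonneg _).trans (hε 0 (left_mem_Icc.2 zero_le_one))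
  refine abs_sub_le_iff.2 ⟨?_, ?_⟩
  · calc len K - len L ≤ ε * (totCurv K + 2) := by linarith
      _ ≤ ε * (max (totCurv K) (totCurv L) + 2) := by gcongr; exact le_max_left _ _
  · calc len L - len K ≤ ε * (totCurv L + 2) := by linarith
      _ ≤ ε * (max (totCurv K) (totCurv L) + 2) := by gcongr; exact le_max_right _ _

lemma norm_sub_comp_le_iSup (hKr : BoundedVariationOn K (Icc 0 1))
    (hLr : BoundedVariationOn L (Icc 0 1)) {φ : ℝ → ℝ} (hφ : MapsTo φ (Icc 0 1) (Icc 0 1))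
    {t : ℝ} (ht : t ∈ Icc (0 : ℝ) 1) :
    ‖K t - L (φ t)‖ ≤ ⨆ s : Icc (0 : ℝ) 1, ‖K s - L (φ s)‖ := by
  have h0 : (0 : ℝ) ∈ Icc 0 1 := left_mem_Icc.2 zero_le_one
  refine le_ciSup (f := fun s : Icc (0 : ℝ) 1 => ‖K s - L (φ s)‖)
    ⟨len K + ‖K 0 - L 0‖ + len L, ?_⟩ ⟨t, ht⟩
  rintro _ ⟨⟨s, hs⟩, rfl⟩
  calc ‖K s - L (φ s)‖ = ‖(K s - K 0) + (K 0 - L 0) + (L 0 - L (φ s))‖ := by abel_nf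
    _ ≤ ‖K s - K 0‖ + ‖K 0 - L 0‖ + ‖L 0 - L (φ s)‖ := norm_add₃_le
    _ ≤ len K + ‖K 0 - L 0‖ + len L := by
        gcongr
        exacts [hKr.norm_sub_le hs h0, hLr.norm_sub_le h0 (hφ hs)]

end Curves

theorem len_diff_le_frechet_mul_general {n : ℕ} (K L : ℝ → EuclideanSpace ℝ (Fin n))
    (hKr : BoundedVariationOn K (Set.Icc 0 1))
    (hLr : BoundedVariationOn L (Set.Icc 0 1))
    (hKtc : BddAbove (tcSet K)) (hLtc : BddAbove (tcSet L)) :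
    |len K - len L| ≤ frechetDist K L * (Real.pi * max (totCurv K) (totCurv L) + 2) := by
  set M := max (totCurv K) (totCurv L)
  have hM0 : 0 ≤ M := (totCurv_nonneg hKtc).trans (le_max_left _ _)
  have hM : M ≤ π * M := le_mul_of_one_le_left hM0 (by linarith [pi_gt_three])
  have hC : 0 < π * M + 2 := by linarith
  have : Nonempty {f : ℝ → ℝ // ContinuousOn f (Set.Icc 0 1) ∧
      StrictMonoOn f (Set.Icc 0 1) ∧ f 0 = 0 ∧ f 1 = 1} :=
    ⟨⟨id, continuousOn_id, strictMonoOn_id, rfl, rfl⟩⟩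
  rw [← div_le_iff₀ hC]
  refine le_ciInf fun ⟨σ, hσc, hσm, hσ0, hσ1⟩ => ?_
  rw [div_le_iff₀ hC]
  have hσI : MapsTo σ (Icc 0 1) (Icc 0 1) := hσm.monotoneOn.mapsTo_Icc_of_map_eq hσ0 hσ1
  calc |len K - len L| ≤ (⨆ t : Icc (0 : ℝ) 1, ‖K t - L (σ t)‖) * (M + 2) :=
        abs_len_sub_len_le_mul hKr hLr hKtc hLtc hσc hσm hσ0 hσ1
          fun t ht => norm_sub_comp_le_iSup hKr hLr hσI ht
    _ ≤ (⨆ t : Icc (0 : ℝ) 1, ‖K t - L (σ t)‖) * (π * M + 2) := by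
        gcongr
        exact (norm_nonneg _).trans
          (norm_sub_comp_le_iSup hKr hLr hσI (left_mem_Icc.2 zero_le_one))

/-- For rectifiable curves `K, L : [0,1] → ℝⁿ` of finite total
curvature, `|len K − len L| ≤ δ(K,L) · (π · max {TC K, TC L} + 2)`, where `δ`
is the Fréchet distance. -/
theorem len_diff_le_frechet_mul {n : ℕ} (K L : ℝ → EuclideanSpace ℝ (Fin n))
    (hKc : ContinuousOn K (Set.Icc 0 1)) (hLc : ContinuousOn L (Set.Icc 0 1))
    (hKr : BoundedVariationOn K (Set.Icc 0 1))
    (hLr : BoundedVariationOn L (Set.Icc 0 1))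
    (hKtc : BddAbove (tcSet K)) (hLtc : BddAbove (tcSet L)) :
    |len K - len L| ≤ frechetDist K L * (Real.pi * max (totCurv K) (totCurv L) + 2) :=
  len_diff_le_frechet_mul_general K L hKr hLr hKtc hLtc
end
end

section
/- Let γ be a curve of finite total curvature in ℝⁿ and define its π-distance π-d(γ) as the supremum of all ℓ > 0 such that every subarc of γ whose endpoints are at distance less than ℓ has total curvature less than π. Then any square-like quadrilateral inscribed in γ (four points on γ in cyclic order forming equal sides and equal diagonals) has side length at least π-d(γ). -/
noncomputable section

/-- For a closed curve given by a `1`-periodic map `γ : ℝ → ℝⁿ`, the set of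
turning-angle sums of polygons inscribed in the open subarc `(a, b)`. -/
def arcTCSet {n : ℕ} (γ : ℝ → EuclideanSpace ℝ (Fin n)) (a b : ℝ) : Set ℝ :=
  {x | ∃ t : List ℝ, t.Chain' (· < ·) ∧ (∀ u ∈ t, u ∈ Set.Ioo a b) ∧
    x = turnSum (t.map γ)}

/-- The total curvature `κ(γ, a, b)` of the open subarc `(a, b)` of the closed
curve `γ`. -/
def arcTC {n : ℕ} (γ : ℝ → EuclideanSpace ℝ (Fin n)) (a b : ℝ) : ℝ :=
  sSup (arcTCSet γ a b)

/-- The set of turning-angle sums of polygons inscribed in the closed curve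
`γ`, with vertex parameters drawn from some window `[a, a+1]` of one period. -/
def circTCSet {n : ℕ} (γ : ℝ → EuclideanSpace ℝ (Fin n)) : Set ℝ :=
  {x | ∃ (a : ℝ) (t : List ℝ), t.Chain' (· < ·) ∧
    (∀ u ∈ t, u ∈ Set.Icc a (a + 1)) ∧ x = turnSum (t.map γ)}

/-- A closed curve has finite total curvature when the turning-angle sums of
its inscribed polygons are bounded above. -/
def FiniteTotalCurvature {n : ℕ} (γ : ℝ → EuclideanSpace ℝ (Fin n)) : Prop :=
  BddAbove (circTCSet γ)

/-- The `π`-distance of a closed curve `γ`: the supremum of all `ℓ` such that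
every open subarc of `γ` whose endpoints lie at distance less than `ℓ` has
total curvature less than `π`. -/
def piDist {n : ℕ} (γ : ℝ → EuclideanSpace ℝ (Fin n)) : ℝ :=
  sSup {ℓ : ℝ | ∀ a b : ℝ, a < b → b < a + 1 → ‖γ a - γ b‖ < ℓ →
    arcTC γ a b < Real.pi}

/-!
Widening the parameter interval `[t₁, t₄]` slightly gives an arc whose chord is as close as we
like to the side length and which contains the polygon `pqrs`. Ptolemy's inequality bounds the
diagonals of a square-like quadrilateral by `√2` times the side, so the angles of `pqrs` at `q`
and `r` are not obtuse and the polygon turns by at least `π`; hence so does the arc.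
-/

open Real InnerProductGeometry Filter Topology

section Angle

variable {V : Type*} [NormedAddCommGroup V] [InnerProductSpace ℝ V]

theorem InnerProductGeometry.pi_div_two_le_angle_of_inner_nonpos {x y : V}
    (h : inner ℝ x y ≤ 0) : π / 2 ≤ angle x y :=
  not_lt.1 fun hlt => (Real.arccos_lt_pi_div_two.1 hlt).not_ge <|
    div_nonpos_of_nonpos_of_nonneg h (by positivity)

theorem pi_div_two_le_angle_sub_sub {p q r : V}
    (h : ‖p - r‖ ^ 2 ≤ ‖p - q‖ ^ 2 + ‖q - r‖ ^ 2) :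
    π / 2 ≤ angle (q - p) (r - q) := by
  refine pi_div_two_le_angle_of_inner_nonpos ?_
  have hsum := norm_add_sq_real (q - p) (r - q)
  rw [show q - p + (r - q) = -(p - r) by abel, norm_neg, norm_sub_rev q p,
    norm_sub_rev r q] at hsum
  linarith

theorem sq_norm_sub_le_two_mul_sq_of_squareLike {p q r s : V}
    (h₂ : ‖p - q‖ = ‖q - r‖) (h₃ : ‖q - r‖ = ‖r - s‖) (h₄ : ‖r - s‖ = ‖s - p‖)
    (hd : ‖p - r‖ = ‖q - s‖) :
    ‖p - r‖ ^ 2 ≤ 2 * ‖p - q‖ ^ 2 := by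
  have hptolemy := EuclideanGeometry.mul_dist_le_mul_dist_add_mul_dist p q r s
  simp only [dist_eq_norm] at hptolemy
  rw [← hd, norm_sub_rev p s, ← h₄, ← h₃, ← h₂] at hptolemy
  linarith

end Angle

theorem turnSum_four {n : ℕ} (p q r s : EuclideanSpace ℝ (Fin n)) :
    turnSum [p, q, r, s] = angle (q - p) (r - q) + angle (r - q) (s - r) := by
  simp [turnSum]

theorem pi_le_turnSum_of_squareLike {n : ℕ} {p q r s : EuclideanSpace ℝ (Fin n)}
    (h₂ : ‖p - q‖ = ‖q - r‖) (h₃ : ‖q - r‖ = ‖r - s‖) (h₄ : ‖r - s‖ = ‖s - p‖)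
    (hd : ‖p - r‖ = ‖q - s‖) :
    π ≤ turnSum [p, q, r, s] := by
  have hpr := sq_norm_sub_le_two_mul_sq_of_squareLike h₂ h₃ h₄ hd
  rw [turnSum_four]
  have hq := pi_div_two_le_angle_sub_sub (p := p) (q := q) (r := r) (by rw [← h₂]; linarith)
  have hr := pi_div_two_le_angle_sub_sub (p := q) (q := r) (r := s)
    (by rw [← hd, ← h₃, ← h₂]; linarith)
  linarith

theorem FiniteTotalCurvature.bddAbove_arcTCSet {n : ℕ} {γ : ℝ → EuclideanSpace ℝ (Fin n)}
    (hγ : FiniteTotalCurvature γ) {a b : ℝ} (hab : b ≤ a + 1) :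
    BddAbove (arcTCSet γ a b) := by
  refine hγ.mono ?_
  rintro x ⟨t, hchain, hmem, rfl⟩
  exact ⟨a, t, hchain, fun u hu => ⟨(hmem u hu).1.le, (hmem u hu).2.le.trans hab⟩, rfl⟩

theorem FiniteTotalCurvature.turnSum_le_arcTC {n : ℕ} {γ : ℝ → EuclideanSpace ℝ (Fin n)}
    (hγ : FiniteTotalCurvature γ) {a b : ℝ} (hab : b ≤ a + 1) {t : List ℝ}
    (hchain : t.Chain' (· < ·)) (hmem : ∀ u ∈ t, u ∈ Set.Ioo a b) :
    turnSum (t.map γ) ≤ arcTC γ a b :=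
  le_csSup (hγ.bddAbove_arcTCSet hab) ⟨t, hchain, hmem, rfl⟩

theorem piDist_le {n : ℕ} {γ : ℝ → EuclideanSpace ℝ (Fin n)} {d : ℝ}
    (h : ∀ ℓ, d < ℓ → ∃ a b, a < b ∧ b < a + 1 ∧ ‖γ a - γ b‖ < ℓ ∧ π ≤ arcTC γ a b) :
    piDist γ ≤ d := by
  refine csSup_le ⟨0, fun a b _ _ hlt => absurd hlt (norm_nonneg _).not_gt⟩ fun ℓ hℓ => ?_
  by_contra! hdℓ
  obtain ⟨a, b, hab, hba, hclose, hpi⟩ := h ℓ hdℓ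
  exact (hℓ a b hab hba hclose).not_ge hpi

theorem Continuous.exists_norm_sub_sub_add_lt {E : Type*} [SeminormedAddCommGroup E]
    {γ : ℝ → E} (hγ : Continuous γ) {s t ℓ c : ℝ} (hst : ‖γ s - γ t‖ < ℓ) (hc : 0 < c) :
    ∃ ε ∈ Set.Ioo 0 c, ‖γ (s - ε) - γ (t + ε)‖ < ℓ := by
  have hlim : Tendsto (fun ε => ‖γ (s - ε) - γ (t + ε)‖) (𝓝[>] 0) (𝓝 ‖γ s - γ t‖) := by
    refine tendsto_nhdsWithin_of_tendsto_nhds ?_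
    simpa using ((hγ.comp (continuous_const.sub continuous_id)).sub
      (hγ.comp (continuous_const.add continuous_id))).norm.tendsto 0
  exact (Eventually.and (Ioo_mem_nhdsGT hc) (hlim.eventually (gt_mem_nhds hst))).exists

theorem inscribed_slq_sidelength_ge_piDist_general {n : ℕ}
    (γ : ℝ → EuclideanSpace ℝ (Fin n))
    (hcont : Continuous γ)
    (hftc : FiniteTotalCurvature γ)
    (t₁ t₂ t₃ t₄ : ℝ) (h12 : t₁ < t₂) (h23 : t₂ < t₃) (h34 : t₃ < t₄)
    (h41 : t₄ < t₁ + 1)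
    (hside₂ : ‖γ t₁ - γ t₂‖ = ‖γ t₂ - γ t₃‖)
    (hside₃ : ‖γ t₂ - γ t₃‖ = ‖γ t₃ - γ t₄‖)
    (hside₄ : ‖γ t₃ - γ t₄‖ = ‖γ t₄ - γ t₁‖)
    (hdiag : ‖γ t₁ - γ t₃‖ = ‖γ t₂ - γ t₄‖) :
    piDist γ ≤ ‖γ t₁ - γ t₂‖ := by
  refine piDist_le fun ℓ hℓ => ?_
  have hchord : ‖γ t₁ - γ t₄‖ < ℓ := by
    rwa [norm_sub_rev, ← hside₄, ← hside₃, ← hside₂]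
  obtain ⟨ε, ⟨hε, hεc⟩, hclose⟩ :=
    hcont.exists_norm_sub_sub_add_lt hchord (c := (t₁ + 1 - t₄) / 2) (by linarith)
  refine ⟨t₁ - ε, t₄ + ε, by linarith, by linarith, hclose, ?_⟩
  calc π ≤ turnSum ([t₁, t₂, t₃, t₄].map γ) :=
        pi_le_turnSum_of_squareLike hside₂ hside₃ hside₄ hdiag
    _ ≤ arcTC γ (t₁ - ε) (t₄ + ε) := by
      refine hftc.turnSum_le_arcTC (by linarith) (by simp [List.Chain', h12, h23, h34]) ?_
      simp only [List.mem_cons, List.not_mem_nil, or_false]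
      rintro u (rfl | rfl | rfl | rfl) <;> constructor <;> linarith

/-- Any square-like quadrilateral inscribed in a closed curve
`γ` of finite total curvature has side length at least the `π`-distance of
`γ`. -/
theorem inscribed_slq_sidelength_ge_piDist {n : ℕ}
    (γ : ℝ → EuclideanSpace ℝ (Fin n))
    (hper : Function.Periodic γ 1) (hcont : Continuous γ)
    (hftc : FiniteTotalCurvature γ)
    (t₁ t₂ t₃ t₄ : ℝ) (h12 : t₁ < t₂) (h23 : t₂ < t₃) (h34 : t₃ < t₄)
    (h41 : t₄ < t₁ + 1)
    (hside₂ : ‖γ t₁ - γ t₂‖ = ‖γ t₂ - γ t₃‖)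
    (hside₃ : ‖γ t₂ - γ t₃‖ = ‖γ t₃ - γ t₄‖)
    (hside₄ : ‖γ t₃ - γ t₄‖ = ‖γ t₄ - γ t₁‖)
    (hdiag : ‖γ t₁ - γ t₃‖ = ‖γ t₂ - γ t₄‖) :
    piDist γ ≤ ‖γ t₁ - γ t₂‖ :=
  inscribed_slq_sidelength_ge_piDist_general γ hcont hftc t₁ t₂ t₃ t₄ h12 h23 h34 h41 hside₂ hside₃
    hside₄ hdiag
end
end

section
/- If the exterior turning-angle sum at the two interior vertices of the open path p→q→r→s of a square-like quadrilateral equals exactly π, then the four points p,q,r,s are coplanar (lie in a 2-dimensional affine subspace) and form a square. -/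
/-!
The triangles `p q r` and `s r q` have the same side lengths, so the turning angles at `q` and
`r` are equal, and their sum being `π` makes both right angles. Pythagoras then gives diagonals
of length `√2`. A quadrilateral whose opposite sides are equal and whose diagonals satisfy the
parallelogram law is a parallelogram, so `s = p + (r - q)` lies in the plane of `p, q, r`.
-/

open EuclideanGeometry Real
open scoped Congruent

section Affine

variable {k V P : Type*} [DivisionRing k] [AddCommGroup V] [Module k V] [AddTorsor V P]

theorem coplanar_insert_vsub_vadd (p q r : P) :
    Coplanar k ({p, q, r, (r -ᵥ q) +ᵥ p} : Set P) := by
  rw [Set.pair_comm, Set.insert_comm q, Set.insert_comm p]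
  have hmem : (r -ᵥ q) +ᵥ p ∈ affineSpan k ({p, q, r} : Set P) :=
    AffineSubspace.vadd_mem_of_mem_direction
      (AffineSubspace.vsub_mem_direction (mem_affineSpan k (by simp)) (mem_affineSpan k (by simp)))
      (mem_affineSpan k (by simp))
  rw [coplanar_insert_iff_of_mem_affineSpan hmem]
  exact coplanar_triple (k := k) p q r

end Affine

section Euclidean

variable {V P : Type*} [NormedAddCommGroup V] [InnerProductSpace ℝ V] [MetricSpace P]
  [NormedAddTorsor V P]

theorem angle_eq_angle_of_dist_eq_of_dist_eq {p q r s : P} (hside : dist p q = dist s r)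
    (hdiag : dist p r = dist q s) : ∠ p q r = ∠ q r s := by
  have hcongr : ![p, q, r] ≅ ![s, r, q] :=
    side_side_side hside (dist_comm q r) (by rw [dist_comm, hdiag, dist_comm])
  exact (angle_eq_of_congruent hcongr 0 1 2).trans (angle_comm s r q)

theorem eq_vsub_vadd_of_dist_eq_of_parallelogram_law {p q r s : P}
    (hsp : dist s p = dist r q) (hsr : dist s r = dist p q)
    (hlaw : dist q s ^ 2 + dist p r ^ 2 = 2 * (dist p q ^ 2 + dist q r ^ 2)) :
    s = (r -ᵥ q) +ᵥ p := by
  rw [eq_vadd_iff_vsub_eq, ← vsub_sub_vsub_cancel_right s p q]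
  rw [dist_comm q s, dist_comm q r] at hlaw
  simp only [dist_eq_norm_vsub V, ← vsub_sub_vsub_cancel_right s p q,
    ← vsub_sub_vsub_cancel_right s r q, ← vsub_sub_vsub_cancel_right p r q] at hsp hsr hlaw
  set x := s -ᵥ q
  set a := p -ᵥ q
  set b := r -ᵥ q
  rw [← sub_eq_zero, ← norm_eq_zero, ← sq_eq_zero_iff (M₀ := ℝ), norm_sub_sq_real, hsp,
    inner_sub_left]
  have hxb := norm_sub_sq_real x b
  have hab := norm_sub_sq_real a b
  rw [hsr] at hxb
  linarith

end Euclidean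

theorem slq_turning_eq_pi_is_square_general {n : ℕ} (p q r s : EuclideanSpace ℝ (Fin n))
    (h1 : ‖p - q‖ = 1) (h2 : ‖q - r‖ = 1) (h3 : ‖r - s‖ = 1) (h4 : ‖s - p‖ = 1)
    (h5 : ‖p - r‖ = ‖q - s‖)
    (heq : (Real.pi - EuclideanGeometry.angle p q r) +
        (Real.pi - EuclideanGeometry.angle q r s) = Real.pi) :
    Coplanar ℝ ({p, q, r, s} : Set (EuclideanSpace ℝ (Fin n))) ∧
    ‖p - r‖ = Real.sqrt 2 ∧ ‖q - s‖ = Real.sqrt 2 := by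
  simp only [← dist_eq_norm] at h1 h2 h3 h4 h5 ⊢
  have hright : ∠ p q r = π / 2 := by
    have hequal := angle_eq_angle_of_dist_eq_of_dist_eq (by rw [h1, dist_comm, h3]) h5
    linarith
  have hdiag : dist p r = √2 := by
    have hpyth := (dist_sq_eq_dist_sq_add_dist_sq_iff_angle_eq_pi_div_two p q r).2 hright
    rw [h1, dist_comm r q, h2] at hpyth
    rw [← sqrt_mul_self dist_nonneg, hpyth]
    norm_num
  have hs : s = (r -ᵥ q) +ᵥ p := by
    refine eq_vsub_vadd_of_dist_eq_of_parallelogram_law ?_ ?_ ?_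
    · rw [h4, dist_comm, h2]
    · rw [dist_comm, h1, h3]
    · rw [← h5, hdiag, h1, h2]; norm_num
  refine ⟨?_, hdiag, h5 ▸ hdiag⟩
  rw [hs]
  exact coplanar_insert_vsub_vadd p q r

/-- If the sum of the exterior turning angles at the two
interior vertices of the open path `p → q → r → s` of a square-like
quadrilateral (unit sides, equal diagonals) equals exactly `π`, then the four
points are coplanar and form a square (diagonals of length `√2`). -/
theorem slq_turning_eq_pi_is_square {n : ℕ} (p q r s : EuclideanSpace ℝ (Fin n))
    (h1 : ‖p - q‖ = 1) (h2 : ‖q - r‖ = 1) (h3 : ‖r - s‖ = 1) (h4 : ‖s - p‖ = 1)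
    (h5 : ‖p - r‖ = ‖q - s‖)
    (hc1 : ¬ Collinear ℝ ({p, q, r} : Set (EuclideanSpace ℝ (Fin n))))
    (hc2 : ¬ Collinear ℝ ({q, r, s} : Set (EuclideanSpace ℝ (Fin n))))
    (heq : (Real.pi - EuclideanGeometry.angle p q r) +
        (Real.pi - EuclideanGeometry.angle q r s) = Real.pi) :
    Coplanar ℝ ({p, q, r, s} : Set (EuclideanSpace ℝ (Fin n))) ∧
    ‖p - r‖ = Real.sqrt 2 ∧ ‖q - s‖ = Real.sqrt 2 :=
  slq_turning_eq_pi_is_square_general p q r s h1 h2 h3 h4 h5 heq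
end

section
/- For a quadrilateral pqrs in ℝⁿ with unit sides and equal diagonals of length d, the sum of turning angles of the open path p→q→r→s equals 2π − 4θ where θ = arcsin(d/2); consequently this sum is a strictly decreasing function of the diagonal length d on (0, √2]. -/
/-!
Both turning angles are apex angles of isosceles triangles with unit legs and base `d`
(`p q r` and `q r s`), so the law of cosines gives `cos ∠ = 1 - d²/2 = cos (2 arcsin (d/2))`,
i.e. each interior angle is `2θ` with `θ = arcsin (d/2)`. Monotonicity is that of `arcsin`.
-/

open Real EuclideanGeometry

theorem angle_eq_two_mul_arcsin_of_dist_eq {V P : Type*} [NormedAddCommGroup V]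
    [InnerProductSpace ℝ V] [MetricSpace P] [NormedAddTorsor V P] {p₁ p₂ p₃ : P}
    (h : dist p₁ p₂ = dist p₃ p₂) (hp : p₁ ≠ p₂) :
    ∠ p₁ p₂ p₃ = 2 * arcsin (dist p₁ p₃ / (2 * dist p₁ p₂)) := by
  have hr : 0 < dist p₁ p₂ := dist_pos.2 hp
  set x := dist p₁ p₃ / (2 * dist p₁ p₂)
  have hx0 : 0 ≤ x := by positivity
  have hx1 : x ≤ 1 := by
    rw [div_le_one (by positivity)]
    linarith [dist_triangle p₁ p₂ p₃, dist_comm p₂ p₃]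
  have hcos_angle : cos (∠ p₁ p₂ p₃) = 1 - 2 * x ^ 2 := by
    have hlaw := law_cos p₁ p₂ p₃
    rw [← h] at hlaw
    simp only [x, div_pow, mul_pow]
    field_simp
    linarith
  have hcos_arcsin : cos (2 * arcsin x) = 1 - 2 * x ^ 2 := by
    rw [cos_two_mul_eq_one_sub, sin_arcsin (by linarith) hx1]
  refine injOn_cos ⟨angle_nonneg _ _ _, angle_le_pi _ _ _⟩ ⟨?_, ?_⟩
    (hcos_angle.trans hcos_arcsin.symm)
  · linarith [arcsin_nonneg.2 hx0]
  · linarith [arcsin_le_pi_div_two x]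

theorem strictMonoOn_arcsin_div_two : StrictMonoOn (fun x => arcsin (x / 2)) (Set.Icc (-2) 2) :=
  fun a ha b hb hab => strictMonoOn_arcsin
    ⟨by linarith [ha.1], by linarith [ha.2]⟩ ⟨by linarith [hb.1], by linarith [hb.2]⟩
    (by linarith)

theorem slq_turning_formula_general {n : ℕ} (p q r s : EuclideanSpace ℝ (Fin n)) (d : ℝ)
    (h1 : ‖p - q‖ = 1) (h2 : ‖q - r‖ = 1) (h3 : ‖r - s‖ = 1)
    (h5 : ‖p - r‖ = d) (h6 : ‖q - s‖ = d) :
    (Real.pi - EuclideanGeometry.angle p q r) +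
        (Real.pi - EuclideanGeometry.angle q r s) =
      2 * Real.pi - 4 * Real.arcsin (d / 2) ∧
    StrictAntiOn (fun x : ℝ => 2 * Real.pi - 4 * Real.arcsin (x / 2))
      (Set.Ioc 0 (Real.sqrt 2)) := by
  simp only [← dist_eq_norm] at h1 h2 h3 h5 h6
  have apex_angle {u v w : EuclideanSpace ℝ (Fin n)} (huv : dist u v = 1) (hvw : dist v w = 1) :
      ∠ u v w = 2 * arcsin (dist u w / 2) := by
    rw [angle_eq_two_mul_arcsin_of_dist_eq (by rw [huv, dist_comm, hvw])
      (dist_pos.1 (by rw [huv]; exact one_pos)), huv, mul_one]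
  refine ⟨?_, fun a ha b hb hab => ?_⟩
  · rw [apex_angle h1 h2, apex_angle h2 h3, h5, h6]
    ring
  · have hsqrt2 : √2 ≤ 2 := Real.sqrt_le_iff.2 ⟨by norm_num, by norm_num⟩
    have harcsin := strictMonoOn_arcsin_div_two ⟨by linarith [ha.1], by linarith [ha.2]⟩
      ⟨by linarith [hb.1], by linarith [hb.2]⟩ hab
    simp only at harcsin ⊢
    linarith

/-- For a quadrilateral `pqrs` in `ℝⁿ` with unit sides and
equal diagonals of length `d ∈ (0, √2]`, the sum of the turning angles of the
open path `p → q → r → s` equals `2π − 4·arcsin(d/2)`; consequently this sum is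
a strictly decreasing function of the diagonal length `d` on `(0, √2]`. -/
theorem slq_turning_formula {n : ℕ} (p q r s : EuclideanSpace ℝ (Fin n)) (d : ℝ)
    (hd0 : 0 < d) (hd2 : d ≤ Real.sqrt 2)
    (h1 : ‖p - q‖ = 1) (h2 : ‖q - r‖ = 1) (h3 : ‖r - s‖ = 1) (h4 : ‖s - p‖ = 1)
    (h5 : ‖p - r‖ = d) (h6 : ‖q - s‖ = d) :
    (Real.pi - EuclideanGeometry.angle p q r) +
        (Real.pi - EuclideanGeometry.angle q r s) =
      2 * Real.pi - 4 * Real.arcsin (d / 2) ∧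
    StrictAntiOn (fun x : ℝ => 2 * Real.pi - 4 * Real.arcsin (x / 2))
      (Set.Ioc 0 (Real.sqrt 2)) :=
  slq_turning_formula_general p q r s d h1 h2 h3 h5 h6
end

section
/- A stairstep curve converging in Fréchet distance to the diagonal of a square but not in arclength must have total curvature tending to infinity: if rectifiable curves Kᵢ converge to L in Fréchet distance but Len(Kᵢ) does not converge to Len(L), then sup_i TC(Kᵢ) = ∞. -/
noncomputable section

/-!
If every polygon inscribed in `K` turns by at most `M` in total, cut it greedily into at most
`M / α + 2` pieces, each turning by at most `α < π / 2`. Projecting a piece onto its first edge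
shows that it is at most `1 / cos α` times as long as its chord. The polygon through the ends of the
pieces has boundedly many vertices, each within `δ` of `L` under a reparametrization witnessing
Fréchet distance `δ`, so `cos α · Len K ≤ Len L + 2 (M / α + 2) δ`. Conversely, a fixed polygon
inscribed in `L` pulls back to one inscribed in `K`, so `Len L ≤ liminf Len Kᵢ`. Letting `δ → 0`
and then `α → 0` gives `Len Kᵢ → Len L`.
-/

open Real InnerProductGeometry Set Filter Topology
open scoped RealInnerProductSpace

lemma cos_mul_norm_mul_norm_le_inner {V : Type*} [NormedAddCommGroup V] [InnerProductSpace ℝ V]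
    {u v : V} {α : ℝ} (h : angle u v ≤ α) (hα : α ≤ π) :
    cos α * (‖u‖ * ‖v‖) ≤ ⟪u, v⟫ := by
  rw [← cos_angle_mul_norm_mul_norm]
  exact mul_le_mul_of_nonneg_right (cos_le_cos_of_nonneg_of_le_pi (angle_nonneg _ _) hα h)
    (by positivity)

lemma le_add_mul_of_forall_lt {x a c d : ℝ} (h : ∀ δ, d < δ → x ≤ a + c * δ) :
    x ≤ a + c * d := by
  have hlim : Tendsto (fun δ => a + c * δ) (𝓝[>] d) (𝓝 (a + c * d)) :=
    ((continuous_const.add (continuous_const.mul continuous_id)).tendsto d).mono_left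
      nhdsWithin_le_nhds
  exact ge_of_tendsto hlim (eventually_nhdsWithin_of_forall h)

section PathLength

variable {P : Type*} [PseudoMetricSpace P]

def pathLen : List P → ℝ
  | a :: b :: l => dist a b + pathLen (b :: l)
  | _ => 0

@[simp] lemma pathLen_nil : pathLen ([] : List P) = 0 := rfl

@[simp] lemma pathLen_singleton (a : P) : pathLen [a] = 0 := rfl

@[simp] lemma pathLen_cons_cons (a b : P) (l : List P) :
    pathLen (a :: b :: l) = dist a b + pathLen (b :: l) := rfl

lemma pathLen_nonneg : ∀ l : List P, 0 ≤ pathLen l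
  | [] | [_] => le_rfl
  | _ :: b :: l => add_nonneg dist_nonneg (pathLen_nonneg (b :: l))

lemma pathLen_append_cons (a : P) (l₂ : List P) : ∀ l₁ : List P,
    pathLen (l₁ ++ a :: l₂) = pathLen (l₁ ++ [a]) + pathLen (a :: l₂)
  | [] => by simp
  | [x] => by simp
  | x :: y :: l₁ => by
    have ih := pathLen_append_cons a l₂ (y :: l₁)
    simp only [List.cons_append, pathLen_cons_cons] at ih ⊢
    rw [ih, add_assoc]

lemma pathLen_map_le_add {ι : Type*} (f g : ι → P) {δ : ℝ} :
    ∀ l : List ι, (∀ x ∈ l, dist (f x) (g x) ≤ δ) →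
      pathLen (l.map f) ≤ pathLen (l.map g) + 2 * l.length * δ
  | [], _ => by simp
  | [x], h => by simpa using dist_nonneg.trans (h x (by simp))
  | x :: y :: l, h => by
    have ih := pathLen_map_le_add f g (y :: l) fun z hz => h z (List.mem_cons_of_mem x hz)
    have hxy : dist (f x) (f y) ≤ dist (g x) (g y) + 2 * δ := by
      have hx := h x (by simp)
      have hy := h y (by simp)
      linarith [dist_triangle4 (f x) (g x) (g y) (f y), dist_comm (f y) (g y)]
    simp only [List.map_cons, pathLen_cons_cons, List.length_cons, Nat.cast_add,
      Nat.cast_one] at ih ⊢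
    linarith

lemma pathLen_map_range (p : ℕ → P) (n : ℕ) :
    pathLen ((List.range (n + 1)).map p) = ∑ i ∈ Finset.range n, dist (p i) (p (i + 1)) := by
  induction n with
  | zero => simp
  | succ n ih =>
    rw [List.range_succ, List.map_append, List.range_succ, List.map_append, List.map_singleton,
      List.map_singleton, List.append_assoc, List.singleton_append, pathLen_append_cons,
      ← List.map_singleton, ← List.map_append, ← List.range_succ, ih, Finset.sum_range_succ]
    simp

lemma mul_pathLen_le_inner {V : Type*} [NormedAddCommGroup V] [InnerProductSpace ℝ V]
    {c : ℝ} {u : V} : ∀ (a b : V) (l : List V),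
      (a :: l ++ [b]).IsChain (fun x y => c * dist x y ≤ ⟪y - x, u⟫) →
        c * pathLen (a :: l ++ [b]) ≤ ⟪b - a, u⟫
  | a, b, [], h => by simpa using h
  | a, b, x :: l, h => by
    rw [List.cons_append, List.cons_append, List.isChain_cons_cons] at h
    have ih := mul_pathLen_le_inner x b l h.2
    rw [List.cons_append, List.cons_append, pathLen_cons_cons, ← List.cons_append,
      ← sub_add_sub_cancel b x a, inner_add_left, mul_add]
    linarith [h.1]

end PathLength

section TurnSum

variable {n : ℕ}

@[simp] lemma turnSum_singleton (a : EuclideanSpace ℝ (Fin n)) : turnSum [a] = 0 := rfl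

@[simp] lemma turnSum_pair (a b : EuclideanSpace ℝ (Fin n)) : turnSum [a, b] = 0 := rfl

@[simp] lemma turnSum_cons_cons_cons (a b c : EuclideanSpace ℝ (Fin n))
    (l : List (EuclideanSpace ℝ (Fin n))) :
    turnSum (a :: b :: c :: l) = angle (b - a) (c - b) + turnSum (b :: c :: l) := rfl

lemma turnSum_nonneg : ∀ l : List (EuclideanSpace ℝ (Fin n)), 0 ≤ turnSum l
  | [] | [_] | [_, _] => le_rfl
  | _ :: b :: c :: l => add_nonneg (angle_nonneg _ _) (turnSum_nonneg (b :: c :: l))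

lemma turnSum_append_cons_cons (a b : EuclideanSpace ℝ (Fin n))
    (l₂ : List (EuclideanSpace ℝ (Fin n))) : ∀ l₁ : List (EuclideanSpace ℝ (Fin n)),
      turnSum (l₁ ++ a :: b :: l₂) = turnSum (l₁ ++ [a, b]) + turnSum (a :: b :: l₂)
  | [] => by simp
  | [x] => by simp
  | [x, y] => by simp [add_assoc]
  | x :: y :: z :: l₁ => by
    have ih := turnSum_append_cons_cons a b l₂ (y :: z :: l₁)
    simp only [List.cons_append, turnSum_cons_cons_cons] at ih ⊢
    rw [ih, add_assoc]

lemma isChain_angle_le {u : EuclideanSpace ℝ (Fin n)} {α : ℝ} :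
    ∀ (a b : EuclideanSpace ℝ (Fin n)) (l : List (EuclideanSpace ℝ (Fin n))) (s : ℝ),
      angle (b - a) u ≤ s → s + turnSum (a :: b :: l) ≤ α →
        (a :: b :: l).IsChain (fun x y => angle (y - x) u ≤ α)
  | a, b, [], s, hs, h => by
    rw [turnSum_pair] at h
    exact .cons_cons (by linarith) (.singleton b)
  | a, b, c :: l, s, hs, h => by
    rw [turnSum_cons_cons_cons] at h
    have hturn := turnSum_nonneg (b :: c :: l)
    have hbc : angle (c - b) u ≤ s + angle (b - a) (c - b) := by
      have := angle_le_angle_add_angle (c - b) (b - a) u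
      rw [angle_comm (c - b) (b - a)] at this
      linarith
    exact .cons_cons (by linarith [angle_nonneg (b - a) (c - b)])
      (isChain_angle_le b c l _ hbc (by linarith))

lemma cos_mul_pathLen_le_dist {α : ℝ} (hα : α < π / 2) {a b : EuclideanSpace ℝ (Fin n)}
    {l : List (EuclideanSpace ℝ (Fin n))} (h : turnSum (a :: l ++ [b]) ≤ α) :
    cos α * pathLen (a :: l ++ [b]) ≤ dist a b := by
  rcases l with _ | ⟨c, l⟩
  · simpa using mul_le_of_le_one_left dist_nonneg (cos_le_one α)
  have hca : c - a ≠ 0 := by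
    -- a zero edge makes the angle `π / 2 > α` with the next one
    intro hca
    obtain ⟨d, l', hl'⟩ := List.exists_cons_of_ne_nil (List.concat_ne_nil b l)
    rw [List.cons_append, List.cons_append, hl', turnSum_cons_cons_cons, hca,
      angle_zero_left] at h
    linarith [turnSum_nonneg (c :: d :: l')]
  set u := c - a
  have hu : 0 < ‖u‖ := norm_pos_iff.2 hca
  have hangle : (a :: c :: l ++ [b]).IsChain (fun x y => angle (y - x) u ≤ α) :=
    isChain_angle_le a c (l ++ [b]) 0 (by rw [angle_self hca]) (by simpa using h)
  have hinner : cos α * ‖u‖ * pathLen (a :: c :: l ++ [b]) ≤ ⟪b - a, u⟫ := by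
    refine mul_pathLen_le_inner a b (c :: l) (hangle.imp fun x y hxy => ?_)
    have := cos_mul_norm_mul_norm_le_inner hxy (by linarith [pi_pos])
    rw [← dist_eq_norm, dist_comm] at this
    linarith
  have hcs : ⟪b - a, u⟫ ≤ dist a b * ‖u‖ := by
    rw [dist_comm, dist_eq_norm]; exact real_inner_le_norm _ _
  nlinarith

lemma exists_append_turnSum_le_lt {α : ℝ} (hα : 0 ≤ α) (a : EuclideanSpace ℝ (Fin n))
    (l : List (EuclideanSpace ℝ (Fin n))) (h : α < turnSum (a :: l)) :
    ∃ l₁ b c l₂, l = l₁ ++ b :: c :: l₂ ∧ turnSum (a :: l₁ ++ [b]) ≤ α ∧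
      α < turnSum (a :: l₁ ++ [b, c]) := by
  induction l using List.reverseRecOn with
  | nil => exact absurd h (by simpa using hα)
  | append_singleton l c ih =>
    by_cases hl : α < turnSum (a :: l)
    · obtain ⟨l₁, b, c', l₂, rfl, h₁, h₂⟩ := ih hl
      exact ⟨l₁, b, c', l₂ ++ [c], by simp, h₁, h₂⟩
    · rcases List.eq_nil_or_concat' l with rfl | ⟨l₁, b, rfl⟩
      · exact absurd h (by simpa using hα)
      · exact ⟨l₁, b, c, [], by simp, not_lt.1 hl, by simpa using h⟩

lemma exists_sublist_cos_mul_pathLen_le {α : ℝ} (hα : 0 < α) (hα' : α < π / 2)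
    (a : EuclideanSpace ℝ (Fin n)) (l : List (EuclideanSpace ℝ (Fin n))) :
    ∃ r, r.Sublist l ∧ (r.length : ℝ) ≤ turnSum (a :: l) / α + 1 ∧
      cos α * pathLen (a :: l) ≤ pathLen (a :: r) := by
  by_cases hle : turnSum (a :: l) ≤ α
  · have hdiv : 0 ≤ turnSum (a :: l) / α := div_nonneg (turnSum_nonneg _) hα.le
    rcases List.eq_nil_or_concat' l with rfl | ⟨l, b, rfl⟩
    · exact ⟨[], .refl _, by simp, by simp⟩
    · refine ⟨[b], List.sublist_append_right _ _, by simpa using hdiv, ?_⟩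
      simpa using cos_mul_pathLen_le_dist hα' hle
  obtain ⟨l₁, c, d, l₂, hl, h₁, h₂⟩ := exists_append_turnSum_le_lt hα.le a l (not_le.1 hle)
  obtain ⟨r, hr, hr_len, hr_path⟩ := exists_sublist_cos_mul_pathLen_le hα hα' c (d :: l₂)
  subst hl
  have hturn : turnSum (a :: l₁ ++ [c, d]) + turnSum (c :: d :: l₂) =
      turnSum (a :: (l₁ ++ c :: d :: l₂)) :=
    (turnSum_append_cons_cons c d l₂ (a :: l₁)).symm
  have hpath : pathLen (a :: (l₁ ++ c :: d :: l₂)) =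
      pathLen (a :: l₁ ++ [c]) + pathLen (c :: d :: l₂) :=
    pathLen_append_cons c (d :: l₂) (a :: l₁)
  refine ⟨c :: r, (hr.cons_cons c).trans (List.sublist_append_right _ _), ?_, ?_⟩
  · have : turnSum (c :: d :: l₂) / α + 1 ≤ turnSum (a :: (l₁ ++ c :: d :: l₂)) / α := by
      rw [div_add_one hα.ne', div_le_div_iff_of_pos_right hα]
      linarith
    simp only [List.length_cons, Nat.cast_add, Nat.cast_one]
    linarith
  · rw [hpath, mul_add, pathLen_cons_cons]
    exact add_le_add (cos_mul_pathLen_le_dist hα' h₁) hr_path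
termination_by l.length
decreasing_by simp [hl]; omega

end TurnSum

section Variation

variable {ι P : Type*} [LinearOrder ι] [PseudoMetricSpace P]

lemma ofReal_pathLen_map_le_eVariationOn (f : ι → P) : ∀ {s : Set ι} (l : List ι),
    l.Pairwise (· ≤ ·) → (∀ x ∈ l, x ∈ s) →
      ENNReal.ofReal (pathLen (l.map f)) ≤ eVariationOn f s
  | _, [], _, _ | _, [_], _, _ => by simp
  | s, a :: b :: l, hl, hs => by
    obtain ⟨ha, hl⟩ := List.pairwise_cons.1 hl
    have hb : ∀ x ∈ b :: l, b ≤ x := by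
      simpa using List.pairwise_cons.1 hl |>.1
    have ih := ofReal_pathLen_map_le_eVariationOn f (s := s ∩ Ici b) (b :: l) hl
      fun x hx => ⟨hs x (List.mem_cons_of_mem a hx), hb x hx⟩
    calc ENNReal.ofReal (pathLen ((a :: b :: l).map f))
        = edist (f a) (f b) + ENNReal.ofReal (pathLen ((b :: l).map f)) := by
          rw [List.map_cons, List.map_cons, pathLen_cons_cons, ← List.map_cons,
            ENNReal.ofReal_add dist_nonneg (pathLen_nonneg _), edist_dist]
      _ ≤ eVariationOn f (s ∩ Iic b) + eVariationOn f (s ∩ Ici b) := by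
          refine add_le_add (eVariationOn.edist_le f ⟨hs a (by simp), ha b (by simp)⟩
            ⟨hs b (by simp), le_rfl⟩) ih
      _ ≤ eVariationOn f (s ∩ Iic b ∪ s ∩ Ici b) :=
          eVariationOn.add_le_union f fun x hx y hy => hx.2.trans hy.2
      _ ≤ eVariationOn f s := eVariationOn.mono f (union_subset inter_subset_left inter_subset_left)

lemma pathLen_map_le_eVariationOn {f : ι → P} {s : Set ι} (hf : BoundedVariationOn f s)
    {l : List ι} (hl : l.Pairwise (· ≤ ·)) (hs : ∀ x ∈ l, x ∈ s) :
    pathLen (l.map f) ≤ (eVariationOn f s).toReal :=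
  (ENNReal.ofReal_le_iff_le_toReal hf).1 (ofReal_pathLen_map_le_eVariationOn f l hl hs)

lemma exists_lt_pathLen_map (f : ι → P) {s : Set ι} {a : ℝ}
    (h : a < (eVariationOn f s).toReal) :
    ∃ l : List ι, l.IsChain (· < ·) ∧ (∀ x ∈ l, x ∈ s) ∧ a < pathLen (l.map f) := by
  rcases lt_or_ge a 0 with ha | ha
  · exact ⟨[], .nil, by simp, by simpa using ha⟩
  have hlt : ENNReal.ofReal a < eVariationOn f s :=
    (ENNReal.ofReal_lt_iff_lt_toReal ha (ENNReal.toReal_pos_iff.1 (ha.trans_lt h)).2.ne).2 h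
  rw [eVariationOn.eVariationOn_eq_strictMonoOn, lt_iSup_iff] at hlt
  obtain ⟨⟨m, u, hu, hus⟩, hlt⟩ := hlt
  refine ⟨(List.range (m + 1)).map u, ?_, by simpa [Nat.lt_succ_iff] using hus, ?_⟩
  · rw [List.isChain_iff_pairwise, List.pairwise_map]
    refine List.pairwise_lt_range.imp_of_mem fun hi hj hij => hu ?_ ?_ hij
    · simpa [Nat.lt_succ_iff] using hi
    · simpa [Nat.lt_succ_iff] using hj
  · rw [List.map_map, pathLen_map_range]
    simp only [edist_dist, dist_comm (f (u (_ + 1)))] at hlt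
    rw [← ENNReal.ofReal_sum_of_nonneg fun _ _ => dist_nonneg] at hlt
    exact (ENNReal.ofReal_lt_ofReal_iff'.1 hlt).1

lemma toReal_eVariationOn_le {f : ι → P} {s : Set ι} {C : ℝ}
    (h : ∀ l : List ι, l.IsChain (· < ·) → (∀ x ∈ l, x ∈ s) → pathLen (l.map f) ≤ C) :
    (eVariationOn f s).toReal ≤ C := by
  by_contra! hC
  obtain ⟨l, hl, hs, hlt⟩ := exists_lt_pathLen_map f hC
  exact (h l hl hs).not_gt hlt

end Variation

section Frechet

def IsReparam (σ : ℝ → ℝ) : Prop :=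
  ContinuousOn σ (Icc 0 1) ∧ StrictMonoOn σ (Icc 0 1) ∧ σ 0 = 0 ∧ σ 1 = 1

lemma IsReparam.mapsTo {σ : ℝ → ℝ} (hσ : IsReparam σ) : MapsTo σ (Icc 0 1) (Icc 0 1) := by
  simpa [hσ.2.2.1, hσ.2.2.2] using hσ.2.1.monotoneOn.mapsTo_Icc

lemma IsReparam.surjOn {σ : ℝ → ℝ} (hσ : IsReparam σ) : SurjOn σ (Icc 0 1) (Icc 0 1) := by
  simpa [hσ.2.2.1, hσ.2.2.2] using
    hσ.1.surjOn_Icc (left_mem_Icc.2 zero_le_one) (right_mem_Icc.2 zero_le_one)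

variable {n : ℕ} {K L : ℝ → EuclideanSpace ℝ (Fin n)}

lemma exists_reparam_dist_lt (hK : BoundedVariationOn K (Icc 0 1))
    (hL : BoundedVariationOn L (Icc 0 1)) {δ : ℝ} (h : frechetDist K L < δ) :
    ∃ σ, IsReparam σ ∧ ∀ t ∈ Icc (0 : ℝ) 1, dist (K t) (L (σ t)) < δ := by
  have : Nonempty {σ : ℝ → ℝ // ContinuousOn σ (Icc 0 1) ∧ StrictMonoOn σ (Icc 0 1) ∧
      σ 0 = 0 ∧ σ 1 = 1} := ⟨⟨id, continuousOn_id, strictMonoOn_id, rfl, rfl⟩⟩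
  obtain ⟨⟨σ, hσ : IsReparam σ⟩, hlt⟩ := exists_lt_of_ciInf_lt h
  refine ⟨σ, hσ, fun t ht => ?_⟩
  -- bounded variation keeps the supremum in `frechetDist` away from its junk value `0`
  have hbdd : BddAbove (range fun t : Icc (0 : ℝ) 1 => ‖K t - L (σ t)‖) := by
    refine ⟨(eVariationOn K (Icc 0 1)).toReal + dist (K 0) (L 0) +
      (eVariationOn L (Icc 0 1)).toReal, ?_⟩
    rintro _ ⟨⟨t, ht⟩, rfl⟩
    have h0 : (0 : ℝ) ∈ Icc 0 1 := left_mem_Icc.2 zero_le_one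
    show ‖K t - L (σ t)‖ ≤ _
    rw [← dist_eq_norm]
    linarith [dist_triangle4 (K t) (K 0) (L 0) (L (σ t)), hK.dist_le ht h0,
      hL.dist_le h0 (hσ.mapsTo ht)]
  rw [dist_eq_norm]
  exact (le_ciSup hbdd ⟨t, ht⟩).trans_lt hlt

lemma pathLen_map_le_len_add (hK : BoundedVariationOn K (Icc 0 1))
    (hL : BoundedVariationOn L (Icc 0 1)) {l : List ℝ} (hl : l.IsChain (· < ·))
    (hl01 : ∀ u ∈ l, u ∈ Icc (0 : ℝ) 1) :
    pathLen (l.map L) ≤ len K + 2 * l.length * frechetDist K L := by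
  refine le_add_mul_of_forall_lt fun δ hδ => ?_
  obtain ⟨σ, hσ, hdist⟩ := exists_reparam_dist_lt hK hL hδ
  set τ := Function.invFunOn σ (Icc 0 1)
  have hτ : ∀ u ∈ l, τ u ∈ Icc 0 1 ∧ σ (τ u) = u := fun u hu =>
    ⟨hσ.surjOn.mapsTo_invFunOn (hl01 u hu), hσ.surjOn.rightInvOn_invFunOn (hl01 u hu)⟩
  have hmono : (l.map τ).Pairwise (· ≤ ·) := by
    rw [List.pairwise_map]
    refine (List.isChain_iff_pairwise.1 hl).imp_of_mem fun hu hv huv => ?_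
    rw [← (hτ _ hu).2, ← (hτ _ hv).2, hσ.2.1.lt_iff_lt (hτ _ hu).1 (hτ _ hv).1] at huv
    exact huv.le
  calc pathLen (l.map L) = pathLen ((l.map τ).map (L ∘ σ)) := by
        rw [List.map_map]
        exact congrArg pathLen (List.map_congr_left fun u hu => by simp [(hτ u hu).2])
    _ ≤ pathLen ((l.map τ).map K) + 2 * (l.map τ).length * δ := by
        refine pathLen_map_le_add _ _ _ fun t ht => ?_
        obtain ⟨u, hu, rfl⟩ := List.mem_map.1 ht
        rw [dist_comm]
        exact (hdist _ (hτ u hu).1).le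
    _ ≤ len K + 2 * l.length * δ := by
        rw [List.length_map]
        gcongr
        refine pathLen_map_le_eVariationOn hK hmono fun t ht => ?_
        obtain ⟨u, hu, rfl⟩ := List.mem_map.1 ht
        exact (hτ u hu).1

lemma cos_mul_len_le_len_add (hK : BoundedVariationOn K (Icc 0 1))
    (hL : BoundedVariationOn L (Icc 0 1)) {M α : ℝ} (hM : ∀ x ∈ tcSet K, x ≤ M)
    (hα : 0 < α) (hα' : α < π / 2) :
    cos α * len K ≤ len L + 2 * (M / α + 2) * frechetDist K L := by
  refine le_add_mul_of_forall_lt fun δ hδ => ?_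
  obtain ⟨σ, hσ, hdist⟩ := exists_reparam_dist_lt hK hL hδ
  have hcos : 0 < cos α := cos_pos_of_mem_Ioo ⟨by linarith [pi_pos], hα'⟩
  have hM0 : 0 ≤ M := hM 0 ⟨[], .nil, by simp, rfl⟩
  have hδ0 : 0 ≤ δ := dist_nonneg.trans (hdist 0 (left_mem_Icc.2 zero_le_one)).le
  rw [← le_div_iff₀' hcos]
  refine toReal_eVariationOn_le fun l hl hl01 => ?_
  rw [le_div_iff₀' hcos]
  rcases l with _ | ⟨a, l⟩
  · simp only [List.map_nil, pathLen_nil, mul_zero]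
    exact add_nonneg ENNReal.toReal_nonneg (by positivity)
  obtain ⟨r, hr, hr_len, hr_path⟩ := exists_sublist_cos_mul_pathLen_le hα hα' (K a) (l.map K)
  obtain ⟨r, hrl, rfl⟩ := List.sublist_map_iff.1 hr
  have hsub : (a :: r).Sublist (a :: l) := hrl.cons_cons a
  have hr01 : ∀ u ∈ a :: r, u ∈ Icc (0 : ℝ) 1 := fun u hu => hl01 u (hsub.subset hu)
  have hturn : turnSum (K a :: l.map K) ≤ M := hM _ ⟨a :: l, hl, hl01, rfl⟩
  have hlen : ((a :: r).length : ℝ) ≤ M / α + 2 := by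
    have := div_le_div_of_nonneg_right hturn hα.le
    simp only [List.length_cons, Nat.cast_add, Nat.cast_one, List.length_map] at hr_len ⊢
    linarith
  have hmono : ((a :: r).map σ).Pairwise (· ≤ ·) := by
    rw [List.pairwise_map]
    exact (List.isChain_iff_pairwise.1 (hl.sublist hsub)).imp_of_mem
      fun hu hv huv => (hσ.2.1 (hr01 _ hu) (hr01 _ hv) huv).le
  calc cos α * pathLen ((a :: l).map K) ≤ pathLen ((a :: r).map K) := hr_path
    _ ≤ pathLen ((a :: r).map (L ∘ σ)) + 2 * (a :: r).length * δ :=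
        pathLen_map_le_add _ _ _ fun t ht => (hdist t (hr01 t ht)).le
    _ ≤ len L + 2 * (M / α + 2) * δ := by
        rw [← List.map_map]
        gcongr
        refine pathLen_map_le_eVariationOn hL hmono fun t ht => ?_
        obtain ⟨u, hu, rfl⟩ := List.mem_map.1 ht
        exact hσ.mapsTo (hr01 u hu)

end Frechet

theorem tendsto_len_of_tendsto_frechetDist {ι : Type*} {F : Filter ι} {n : ℕ}
    {K : ι → ℝ → EuclideanSpace ℝ (Fin n)} {L : ℝ → EuclideanSpace ℝ (Fin n)}
    (hK : ∀ i, BoundedVariationOn (K i) (Icc 0 1)) (hL : BoundedVariationOn L (Icc 0 1))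
    (hKL : Tendsto (fun i => frechetDist (K i) L) F (𝓝 0)) {M : ℝ}
    (hM : ∀ i, ∀ x ∈ tcSet (K i), x ≤ M) :
    Tendsto (fun i => len (K i)) F (𝓝 (len L)) := by
  refine tendsto_order.2 ⟨fun a ha => ?_, fun b hb => ?_⟩
  · obtain ⟨l, hl, hl01, hal⟩ := exists_lt_pathLen_map L ha
    have hlim : Tendsto (fun i => pathLen (l.map L) - 2 * l.length * frechetDist (K i) L) F
        (𝓝 (pathLen (l.map L))) := by
      simpa using tendsto_const_nhds.sub (hKL.const_mul (2 * (l.length : ℝ)))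
    filter_upwards [hlim.eventually (lt_mem_nhds hal)] with i hi
    linarith [pathLen_map_le_len_add (hK i) hL hl hl01]
  · obtain ⟨α, hαb, hα⟩ : ∃ α, len L < b * cos α ∧ α ∈ Ioo 0 (π / 2) := by
      have hcos : Tendsto (fun α => b * cos α) (𝓝[>] 0) (𝓝 b) := by
        simpa using ((continuous_cos.tendsto 0).const_mul b).mono_left nhdsWithin_le_nhds
      exact ((hcos.eventually (lt_mem_nhds hb)).and (Ioo_mem_nhdsGT (by positivity))).exists
    have hlim : Tendsto (fun i => len L + 2 * (M / α + 2) * frechetDist (K i) L) F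
        (𝓝 (len L)) := by
      simpa using tendsto_const_nhds.add (hKL.const_mul (2 * (M / α + 2)))
    filter_upwards [hlim.eventually (gt_mem_nhds hαb)] with i hi
    have hcos : 0 < cos α := cos_pos_of_mem_Ioo ⟨by linarith [hα.1, pi_pos], hα.2⟩
    have hcos_len : cos α * len (K i) < cos α * b := by
      linarith [cos_mul_len_le_len_add (hK i) hL (hM i) hα.1 hα.2]
    exact lt_of_mul_lt_mul_left hcos_len hcos.le

theorem totCurv_unbounded_of_len_not_tendsto_general {n : ℕ}
    (K : ℕ → ℝ → EuclideanSpace ℝ (Fin n)) (L : ℝ → EuclideanSpace ℝ (Fin n))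
    (hKr : ∀ i, BoundedVariationOn (K i) (Set.Icc 0 1))
    (hLr : BoundedVariationOn L (Set.Icc 0 1))
    (hfr : Filter.Tendsto (fun i => frechetDist (K i) L) Filter.atTop (nhds 0))
    (hlen : ¬ Filter.Tendsto (fun i => len (K i)) Filter.atTop (nhds (len L))) :
    ∀ M : ℝ, ∃ i, ∃ x ∈ tcSet (K i), M < x := by
  by_contra! h
  obtain ⟨M, hM⟩ := h
  exact hlen (tendsto_len_of_tendsto_frechetDist hKr hLr hfr hM)

/-- If rectifiable curves `Kᵢ` converge to `L` in Fréchet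
distance but their arclengths do not converge to the arclength of `L`, then
the total curvatures of the `Kᵢ` are unbounded: `sup_i TC(Kᵢ) = ∞`. -/
theorem totCurv_unbounded_of_len_not_tendsto {n : ℕ}
    (K : ℕ → ℝ → EuclideanSpace ℝ (Fin n)) (L : ℝ → EuclideanSpace ℝ (Fin n))
    (hKc : ∀ i, ContinuousOn (K i) (Set.Icc 0 1))
    (hLc : ContinuousOn L (Set.Icc 0 1))
    (hKr : ∀ i, BoundedVariationOn (K i) (Set.Icc 0 1))
    (hLr : BoundedVariationOn L (Set.Icc 0 1))
    (hfr : Filter.Tendsto (fun i => frechetDist (K i) L) Filter.atTop (nhds 0))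
    (hlen : ¬ Filter.Tendsto (fun i => len (K i)) Filter.atTop (nhds (len L))) :
    ∀ M : ℝ, ∃ i, ∃ x ∈ tcSet (K i), M < x :=
  totCurv_unbounded_of_len_not_tendsto_general K L hKr hLr hfr hlen
end
end
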